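/- Let B : ℝ³ → ℝ³ be continuously differentiable with ∇·B(x) = 0 for all x ∈ ℝ³. Define, for smooth functions m, n : ℝ³ × ℝ³ → ℝ of (x,v), the bracket {m,n}(x,v) = ∇_x m · ∇_v n − ∇_v m · ∇_x n + B(x) · (∇_v m × ∇_v n). Then this bracket satisfies the Jacobi identity: for all smooth m, n, p : ℝ³ × ℝ³ → ℝ and all (x,v) ∈ ℝ³ × ℝ³, {{m,n},p}(x,v) + {{n,p},m}(x,v) + {{p,m},n}(x,v) = 0. -/

import Mathlib

open Matrix
open scoped Matrix BigOperators

noncomputable section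

/-- Single-particle phase space: position and velocity in ℝ³. -/
abbrev PhasePt := (Fin 3 → ℝ) × (Fin 3 → ℝ)

/-- Gradient of `m` with respect to the position variable `x`. -/
def gradx (m : PhasePt → ℝ) (z : PhasePt) : Fin 3 → ℝ :=
  fun i => fderiv ℝ m z (Pi.single i 1, 0)

/-- Gradient of `m` with respect to the velocity variable `v`. -/
def gradv (m : PhasePt → ℝ) (z : PhasePt) : Fin 3 → ℝ :=
  fun i => fderiv ℝ m z (0, Pi.single i 1)

/-- Divergence of a vector field on ℝ³. -/
def div3 (B : (Fin 3 → ℝ) → Fin 3 → ℝ) (x : Fin 3 → ℝ) : ℝ :=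
  ∑ i, fderiv ℝ (fun y => B y i) x (Pi.single i 1)

/-- The single-particle phase-space bracket with magnetic field `B`. -/
def spBracket (B : (Fin 3 → ℝ) → Fin 3 → ℝ) (m n : PhasePt → ℝ) (z : PhasePt) : ℝ :=
  gradx m z ⬝ᵥ gradv n z - gradv m z ⬝ᵥ gradx n z +
    B z.1 ⬝ᵥ (gradv m z ⨯₃ gradv n z)

/-- Basis vectors in the position directions. -/
def Xb (i : Fin 3) : PhasePt := (Pi.single i 1, 0)

/-- Basis vectors in the velocity directions. -/
def Vb (i : Fin 3) : PhasePt := ((0 : Fin 3 → ℝ), Pi.single i 1)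

lemma fst_Xb (i : Fin 3) : (Xb i).1 = Pi.single i 1 := rfl
lemma fst_Vb (i : Fin 3) : (Vb i).1 = 0 := rfl

lemma hasFDerivAt_fderiv_apply (q : PhasePt → ℝ) (hq : ContDiff ℝ (⊤ : ℕ∞) q) (z u : PhasePt) :
    HasFDerivAt (fun z => fderiv ℝ q z u)
      ((ContinuousLinearMap.apply ℝ ℝ u).comp (fderiv ℝ (fderiv ℝ q) z)) z := by
  have h1 : HasFDerivAt (fderiv ℝ q) (fderiv ℝ (fderiv ℝ q) z) z :=
    (((hq.fderiv_right (m := 1) (WithTop.coe_le_coe.mpr le_top)).differentiable one_ne_zero) z).hasFDerivAt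
  exact ((ContinuousLinearMap.apply ℝ ℝ u).hasFDerivAt).comp z h1

lemma hasFDerivAt_B_apply (B : (Fin 3 → ℝ) → Fin 3 → ℝ) (hB : ContDiff ℝ 1 B)
    (z : PhasePt) (k : Fin 3) :
    HasFDerivAt (fun z : PhasePt => B z.1 k)
      ((fderiv ℝ (fun x => B x k) z.1).comp (ContinuousLinearMap.fst ℝ (Fin 3 → ℝ) (Fin 3 → ℝ))) z := by
  have hBk : ContDiff ℝ 1 (fun x => B x k) := contDiff_pi.mp hB k
  exact (((hBk.differentiable one_ne_zero) z.1).hasFDerivAt).comp z (hasFDerivAt_fst)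

lemma spBracket_expand (B : (Fin 3 → ℝ) → Fin 3 → ℝ) (q r : PhasePt → ℝ) (z : PhasePt) :
    spBracket B q r z =
      (fderiv ℝ q z (Xb 0) * fderiv ℝ r z (Vb 0) + fderiv ℝ q z (Xb 1) * fderiv ℝ r z (Vb 1) + fderiv ℝ q z (Xb 2) * fderiv ℝ r z (Vb 2))
      - (fderiv ℝ q z (Vb 0) * fderiv ℝ r z (Xb 0) + fderiv ℝ q z (Vb 1) * fderiv ℝ r z (Xb 1) + fderiv ℝ q z (Vb 2) * fderiv ℝ r z (Xb 2))
      + B z.1 0 * (fderiv ℝ q z (Vb 1) * fderiv ℝ r z (Vb 2) - fderiv ℝ q z (Vb 2) * fderiv ℝ r z (Vb 1))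
      + B z.1 1 * (fderiv ℝ q z (Vb 2) * fderiv ℝ r z (Vb 0) - fderiv ℝ q z (Vb 0) * fderiv ℝ r z (Vb 2))
      + B z.1 2 * (fderiv ℝ q z (Vb 0) * fderiv ℝ r z (Vb 1) - fderiv ℝ q z (Vb 1) * fderiv ℝ r z (Vb 0)) := by
  simp [spBracket, gradx, gradv, dotProduct, Fin.sum_univ_three, cross_apply, Xb, Vb]
  ring

set_option maxHeartbeats 1000000 in
lemma fderiv_spBracket (B : (Fin 3 → ℝ) → Fin 3 → ℝ) (hB : ContDiff ℝ 1 B)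
    (q r : PhasePt → ℝ) (hq : ContDiff ℝ (⊤ : ℕ∞) q) (hr : ContDiff ℝ (⊤ : ℕ∞) r) (z w : PhasePt) :
    fderiv ℝ (spBracket B q r) z w =
        (fderiv ℝ (fderiv ℝ q) z w (Xb 0) * fderiv ℝ r z (Vb 0) + fderiv ℝ q z (Xb 0) * fderiv ℝ (fderiv ℝ r) z w (Vb 0))
        - (fderiv ℝ (fderiv ℝ q) z w (Vb 0) * fderiv ℝ r z (Xb 0) + fderiv ℝ q z (Vb 0) * fderiv ℝ (fderiv ℝ r) z w (Xb 0))
        + (fderiv ℝ (fderiv ℝ q) z w (Xb 1) * fderiv ℝ r z (Vb 1) + fderiv ℝ q z (Xb 1) * fderiv ℝ (fderiv ℝ r) z w (Vb 1))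
        - (fderiv ℝ (fderiv ℝ q) z w (Vb 1) * fderiv ℝ r z (Xb 1) + fderiv ℝ q z (Vb 1) * fderiv ℝ (fderiv ℝ r) z w (Xb 1))
        + (fderiv ℝ (fderiv ℝ q) z w (Xb 2) * fderiv ℝ r z (Vb 2) + fderiv ℝ q z (Xb 2) * fderiv ℝ (fderiv ℝ r) z w (Vb 2))
        - (fderiv ℝ (fderiv ℝ q) z w (Vb 2) * fderiv ℝ r z (Xb 2) + fderiv ℝ q z (Vb 2) * fderiv ℝ (fderiv ℝ r) z w (Xb 2))
        + fderiv ℝ (fun x => B x 0) z.1 (w).1 * (fderiv ℝ q z (Vb 1) * fderiv ℝ r z (Vb 2) - fderiv ℝ q z (Vb 2) * fderiv ℝ r z (Vb 1))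
        + B z.1 0 * (fderiv ℝ (fderiv ℝ q) z w (Vb 1) * fderiv ℝ r z (Vb 2) + fderiv ℝ q z (Vb 1) * fderiv ℝ (fderiv ℝ r) z w (Vb 2) - (fderiv ℝ (fderiv ℝ q) z w (Vb 2) * fderiv ℝ r z (Vb 1) + fderiv ℝ q z (Vb 2) * fderiv ℝ (fderiv ℝ r) z w (Vb 1)))
        + fderiv ℝ (fun x => B x 1) z.1 (w).1 * (fderiv ℝ q z (Vb 2) * fderiv ℝ r z (Vb 0) - fderiv ℝ q z (Vb 0) * fderiv ℝ r z (Vb 2))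
        + B z.1 1 * (fderiv ℝ (fderiv ℝ q) z w (Vb 2) * fderiv ℝ r z (Vb 0) + fderiv ℝ q z (Vb 2) * fderiv ℝ (fderiv ℝ r) z w (Vb 0) - (fderiv ℝ (fderiv ℝ q) z w (Vb 0) * fderiv ℝ r z (Vb 2) + fderiv ℝ q z (Vb 0) * fderiv ℝ (fderiv ℝ r) z w (Vb 2)))
        + fderiv ℝ (fun x => B x 2) z.1 (w).1 * (fderiv ℝ q z (Vb 0) * fderiv ℝ r z (Vb 1) - fderiv ℝ q z (Vb 1) * fderiv ℝ r z (Vb 0))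
        + B z.1 2 * (fderiv ℝ (fderiv ℝ q) z w (Vb 0) * fderiv ℝ r z (Vb 1) + fderiv ℝ q z (Vb 0) * fderiv ℝ (fderiv ℝ r) z w (Vb 1) - (fderiv ℝ (fderiv ℝ q) z w (Vb 1) * fderiv ℝ r z (Vb 0) + fderiv ℝ q z (Vb 1) * fderiv ℝ (fderiv ℝ r) z w (Vb 0))) := by
  rw [show spBracket B q r = (fun z : PhasePt =>
      (fderiv ℝ q z (Xb 0) * fderiv ℝ r z (Vb 0) + fderiv ℝ q z (Xb 1) * fderiv ℝ r z (Vb 1) + fderiv ℝ q z (Xb 2) * fderiv ℝ r z (Vb 2))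
      - (fderiv ℝ q z (Vb 0) * fderiv ℝ r z (Xb 0) + fderiv ℝ q z (Vb 1) * fderiv ℝ r z (Xb 1) + fderiv ℝ q z (Vb 2) * fderiv ℝ r z (Xb 2))
      + B z.1 0 * (fderiv ℝ q z (Vb 1) * fderiv ℝ r z (Vb 2) - fderiv ℝ q z (Vb 2) * fderiv ℝ r z (Vb 1))
      + B z.1 1 * (fderiv ℝ q z (Vb 2) * fderiv ℝ r z (Vb 0) - fderiv ℝ q z (Vb 0) * fderiv ℝ r z (Vb 2))
      + B z.1 2 * (fderiv ℝ q z (Vb 0) * fderiv ℝ r z (Vb 1) - fderiv ℝ q z (Vb 1) * fderiv ℝ r z (Vb 0))) from funext (spBracket_expand B q r)]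
  have Hq := hasFDerivAt_fderiv_apply q hq z
  have Hr := hasFDerivAt_fderiv_apply r hr z
  have HB := hasFDerivAt_B_apply B hB z
  have H := ((((((((Hq (Xb 0)).mul (Hr (Vb 0))).add ((Hq (Xb 1)).mul (Hr (Vb 1)))).add ((Hq (Xb 2)).mul (Hr (Vb 2)))).sub ((((Hq (Vb 0)).mul (Hr (Xb 0))).add ((Hq (Vb 1)).mul (Hr (Xb 1)))).add ((Hq (Vb 2)).mul (Hr (Xb 2))))).add ((HB 0).mul (((Hq (Vb 1)).mul (Hr (Vb 2))).sub ((Hq (Vb 2)).mul (Hr (Vb 1)))))).add ((HB 1).mul (((Hq (Vb 2)).mul (Hr (Vb 0))).sub ((Hq (Vb 0)).mul (Hr (Vb 2)))))).add ((HB 2).mul (((Hq (Vb 0)).mul (Hr (Vb 1))).sub ((Hq (Vb 1)).mul (Hr (Vb 0))))))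
  erw [H.fderiv]
  simp only [ContinuousLinearMap.add_apply, ContinuousLinearMap.sub_apply,
    ContinuousLinearMap.smul_apply, ContinuousLinearMap.comp_apply,
    ContinuousLinearMap.apply_apply, ContinuousLinearMap.coe_fst', smul_eq_mul,
    Pi.mul_apply, Pi.sub_apply, Pi.add_apply]
  ring

set_option maxHeartbeats 4000000 in
/-- The single-particle phase-space bracket with a divergence-free magnetic field
satisfies the Jacobi identity. -/
theorem single_particle_bracket_jacobi
    (B : (Fin 3 → ℝ) → Fin 3 → ℝ) (hB : ContDiff ℝ 1 B)
    (hdiv : ∀ x, div3 B x = 0)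
    (m n p : PhasePt → ℝ) (hm : ContDiff ℝ (⊤ : ℕ∞) m) (hn : ContDiff ℝ (⊤ : ℕ∞) n)
    (hp : ContDiff ℝ (⊤ : ℕ∞) p) (z : PhasePt) :
    spBracket B (spBracket B m n) p z + spBracket B (spBracket B n p) m z +
      spBracket B (spBracket B p m) n z = 0 := by
  have hsm : ∀ v w : PhasePt, fderiv ℝ (fderiv ℝ m) z v w = fderiv ℝ (fderiv ℝ m) z w v :=
    hm.contDiffAt.isSymmSndFDerivAt (by rw [minSmoothness_of_isRCLikeNormedField]; exact WithTop.coe_le_coe.mpr le_top)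
  have hsn : ∀ v w : PhasePt, fderiv ℝ (fderiv ℝ n) z v w = fderiv ℝ (fderiv ℝ n) z w v :=
    hn.contDiffAt.isSymmSndFDerivAt (by rw [minSmoothness_of_isRCLikeNormedField]; exact WithTop.coe_le_coe.mpr le_top)
  have hsp : ∀ v w : PhasePt, fderiv ℝ (fderiv ℝ p) z v w = fderiv ℝ (fderiv ℝ p) z w v :=
    hp.contDiffAt.isSymmSndFDerivAt (by rw [minSmoothness_of_isRCLikeNormedField]; exact WithTop.coe_le_coe.mpr le_top)
  have hd := hdiv z.1
  simp only [div3, Fin.sum_univ_three] at hd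
  have h22 : fderiv ℝ (fun y => B y 2) z.1 (Pi.single 2 1) =
      - fderiv ℝ (fun y => B y 0) z.1 (Pi.single 0 1)
      - fderiv ℝ (fun y => B y 1) z.1 (Pi.single 1 1) := by linarith
  rw [spBracket_expand B (spBracket B m n) p z, spBracket_expand B (spBracket B n p) m z,
    spBracket_expand B (spBracket B p m) n z]
  simp only [fderiv_spBracket B hB m n hm hn z, fderiv_spBracket B hB n p hn hp z,
    fderiv_spBracket B hB p m hp hm z, fst_Xb, fst_Vb, map_zero]
  simp only [hsm (Xb 1) (Xb 0), hsm (Xb 2) (Xb 0), hsm (Xb 2) (Xb 1), hsm (Vb 0) (Xb 0), hsm (Vb 0) (Xb 1), hsm (Vb 0) (Xb 2), hsm (Vb 1) (Xb 0), hsm (Vb 1) (Xb 1), hsm (Vb 1) (Xb 2), hsm (Vb 1) (Vb 0), hsm (Vb 2) (Xb 0), hsm (Vb 2) (Xb 1), hsm (Vb 2) (Xb 2), hsm (Vb 2) (Vb 0), hsm (Vb 2) (Vb 1), hsn (Xb 1) (Xb 0), hsn (Xb 2) (Xb 0), hsn (Xb 2) (Xb 1), hsn (Vb 0) (Xb 0),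 hsn (Vb 0) (Xb 1), hsn (Vb 0) (Xb 2), hsn (Vb 1) (Xb 0), hsn (Vb 1) (Xb 1), hsn (Vb 1) (Xb 2), hsn (Vb 1) (Vb 0), hsn (Vb 2) (Xb 0), hsn (Vb 2) (Xb 1), hsn (Vb 2) (Xb 2), hsn (Vb 2) (Vb 0), hsn (Vb 2) (Vb 1), hsp (Xb 1) (Xb 0), hsp (Xb 2) (Xb 0), hsp (Xb 2) (Xb 1), hsp (Vb 0) (Xb 0), hsp (Vb 0) (Xb 1), hsp (Vb 0) (Xb 2), hsp (Vb 1) (Xb 0), hsp (Vb 1) (Xb 1), hsp (Vb 1) (Xb 2), hsp (Vb 1) (Vb 0), hsp (Vb 2) (Xb 0), hsp (Vb 2) (Xb 1), hsp (Vb 2) (Xb 2), hsp (Vb 2) (Vb 0), hsp (Vb 2) (Vb 1)]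
  rw [h22]
  ring

end
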